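/- arXiv:2604.10050 — 3 statements merged into one kernel-verified Lean document; each statement's English description precedes it below -/
import Mathlib

section
/- Let N ≥ 2 be an integer, α a real number, and Ω ⊆ ℝ^N \ {0} an open set. Let u : Ω → ℝ be a C² function with ∇u(x) ≠ 0 for every x ∈ Ω, satisfying pointwise −div( |∇u|^{N−2} ∇u )(x) = |x|^{Nα} e^{u(x)} on Ω. Then the function v := e^{−u/N} satisfies, for every x ∈ Ω, div( |∇v|^{N−2} ∇v )(x) = (1/v(x)) · ( (N−1) |∇v(x)|^N + |x|^{Nα} N^{1−N} ). -/
/-!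
Write `v = f ∘ u` with `f t = e^{-t/N}`. Since `∇v = f'(u) ∇u`, the `N`-Laplacian flux of `v` is
`ψ(u)` times that of `u`, where `ψ = |f'|^{N-2} f' = -(e^{-t/N}/N)^{N-1}`. The product rule for the
divergence gives `Δ_N v = ψ(u) Δ_N u + ψ'(u) |∇u|^N`; substituting the equation for `Δ_N u` and
`e^u = v^{-N}` leaves an identity between real powers.
-/

open MeasureTheory Filter
open scoped RealInnerProductSpace Topology

noncomputable section

/-- Euclidean divergence of a vector field on `ℝ^N`. -/
def ediv {N : ℕ} (F : EuclideanSpace ℝ (Fin N) → EuclideanSpace ℝ (Fin N))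
    (x : EuclideanSpace ℝ (Fin N)) : ℝ :=
  ∑ i, fderiv ℝ F x (EuclideanSpace.single i 1) i

section Gradient

variable {E : Type*} [NormedAddCommGroup E] [InnerProductSpace ℝ E] [CompleteSpace E]

theorem HasDerivAt.gradient_comp {f : ℝ → ℝ} {f' : ℝ} {u : E → ℝ} {x : E}
    (hf : HasDerivAt f f' (u x)) (hu : DifferentiableAt ℝ u x) :
    gradient (fun y => f (u y)) x = f' • gradient u x := by
  have h : HasFDerivAt (fun y => f (u y)) (f' • fderiv ℝ u x) x :=
    hf.comp_hasFDerivAt x hu.hasFDerivAt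
  rw [gradient, h.fderiv, map_smul, gradient]

theorem fderiv_apply_gradient_self (u : E → ℝ) (x : E) :
    fderiv ℝ u x (gradient u x) = ‖gradient u x‖ ^ 2 := by
  rw [← inner_gradient_left, real_inner_self_eq_norm_sq]

theorem ContDiffAt.gradient {u : E → ℝ} {x : E} {n : WithTop ℕ∞}
    (hu : ContDiffAt ℝ (n + 1) u x) : ContDiffAt ℝ n (gradient u) x :=
  (InnerProductSpace.toDual ℝ E).symm.contDiff.contDiffAt.comp x (hu.fderiv_right le_rfl)

end Gradient

theorem norm_smul_rpow_smul {E : Type*} [NormedAddCommGroup E] [NormedSpace ℝ E]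
    (c : ℝ) (g : E) (q : ℝ) :
    ‖c • g‖ ^ q • (c • g) = (|c| ^ q * c) • (‖g‖ ^ q • g) := by
  rw [norm_smul, Real.norm_eq_abs, Real.mul_rpow (abs_nonneg c) (norm_nonneg g), smul_smul,
    smul_smul]
  ring_nf

section Divergence

variable {N : ℕ}

theorem sum_apply_single_mul (ℓ : EuclideanSpace ℝ (Fin N) →L[ℝ] ℝ)
    (w : EuclideanSpace ℝ (Fin N)) :
    ∑ i, ℓ (EuclideanSpace.single i 1) * w i = ℓ w := by
  conv_rhs => rw [← (EuclideanSpace.basisFun (Fin N) ℝ).sum_repr w]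
  simp [map_sum, mul_comm]

theorem ediv_congr_of_eventuallyEq {F G : EuclideanSpace ℝ (Fin N) → EuclideanSpace ℝ (Fin N)}
    {x : EuclideanSpace ℝ (Fin N)} (h : F =ᶠ[𝓝 x] G) : ediv F x = ediv G x := by
  rw [ediv, ediv, h.fderiv_eq]

theorem ediv_smul {φ : EuclideanSpace ℝ (Fin N) → ℝ}
    {F : EuclideanSpace ℝ (Fin N) → EuclideanSpace ℝ (Fin N)} {x : EuclideanSpace ℝ (Fin N)}
    (hφ : DifferentiableAt ℝ φ x) (hF : DifferentiableAt ℝ F x) :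
    ediv (fun y => φ y • F y) x = φ x * ediv F x + fderiv ℝ φ x (F x) := by
  simp only [ediv, fderiv_fun_smul hφ hF, add_apply, smul_apply,
    ContinuousLinearMap.smulRight_apply, PiLp.add_apply, PiLp.smul_apply, smul_eq_mul,
    Finset.sum_add_distrib, ← Finset.mul_sum, sum_apply_single_mul]

theorem ediv_comp_smul_flux {u : EuclideanSpace ℝ (Fin N) → ℝ}
    {x : EuclideanSpace ℝ (Fin N)} {ψ : ℝ → ℝ} {ψ' : ℝ} (p : ℝ) (hu : ContDiffAt ℝ 2 u x)
    (hgrad : gradient u x ≠ 0) (hψ : HasDerivAt ψ ψ' (u x)) :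
    ediv (fun y => ψ (u y) • (‖gradient u y‖ ^ (p - 2) • gradient u y)) x
      = ψ (u x) * ediv (fun y => ‖gradient u y‖ ^ (p - 2) • gradient u y) x
        + ψ' * ‖gradient u x‖ ^ p := by
  have hg : ContDiffAt ℝ 1 (gradient u) x := hu.gradient
  have hr : ‖gradient u x‖ ≠ 0 := norm_ne_zero_iff.2 hgrad
  have hflux : DifferentiableAt ℝ (fun y => ‖gradient u y‖ ^ (p - 2) • gradient u y) x :=
    (((hg.norm ℝ hgrad).rpow_const_of_ne hr).smul hg).differentiableAt one_ne_zero
  have hψu : HasFDerivAt (fun y => ψ (u y)) (ψ' • fderiv ℝ u x) x :=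
    hψ.comp_hasFDerivAt x (hu.differentiableAt two_ne_zero).hasFDerivAt
  have hpow : ‖gradient u x‖ ^ (p - 2) = ‖gradient u x‖ ^ p / ‖gradient u x‖ ^ 2 := by
    exact_mod_cast Real.rpow_sub_natCast hr p 2
  rw [ediv_smul hψu.differentiableAt hflux, hψu.fderiv]
  simp only [smul_apply, map_smul, fderiv_apply_gradient_self, smul_eq_mul, hpow]
  field_simp

end Divergence

-- `a`, `r`, `B` stand for `v(x) = e^{-u(x)/N}`, `|∇u(x)|` and `|x|^{Nα}`.
theorem pLaplacian_exp_substitution_identity (n a r B : ℝ) (hn : 0 < n) (ha : 0 < a)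
    (hr : 0 ≤ r) :
    -(a / n) ^ (n - 1) * -(B * a ^ (-n))
        + -(-(a / n) / n * (n - 1) * (a / n) ^ (n - 1 - 1)) * r ^ n
      = 1 / a * ((n - 1) * (a / n * r) ^ n + B * n ^ (1 - n)) := by
  have hw : 0 < a / n := by positivity
  rw [Real.rpow_sub_one hw.ne', Real.rpow_sub_one (by positivity), Real.rpow_sub_one hw.ne',
    Real.mul_rpow hw.le hr, Real.div_rpow ha.le hn.le, Real.rpow_neg ha.le,
    show 1 - n = -(n - 1) by ring, Real.rpow_neg hn.le, Real.rpow_sub_one hn.ne']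
  have : 0 < a ^ n := by positivity
  have : 0 < n ^ n := by positivity
  field_simp
  ring

theorem statement9_general (N : ℕ) (hN : 2 ≤ N) (α : ℝ)
    (Ω : Set (EuclideanSpace ℝ (Fin N))) (hΩopen : IsOpen Ω)
    (u : EuclideanSpace ℝ (Fin N) → ℝ) (hu : ContDiffOn ℝ 2 u Ω)
    (hgrad : ∀ x ∈ Ω, gradient u x ≠ 0)
    (hpde : ∀ x ∈ Ω,
      -ediv (fun y => ‖gradient u y‖ ^ ((N : ℝ) - 2) • gradient u y) x
        = ‖x‖ ^ ((N : ℝ) * α) * Real.exp (u x)) :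
    ∀ x ∈ Ω,
      ediv (fun y => ‖gradient (fun w => Real.exp (-(u w) / N)) y‖ ^ ((N : ℝ) - 2) •
          gradient (fun w => Real.exp (-(u w) / N)) y) x
        = (1 / Real.exp (-(u x) / N)) *
            (((N : ℝ) - 1) * ‖gradient (fun w => Real.exp (-(u w) / N)) x‖ ^ (N : ℝ)
              + ‖x‖ ^ ((N : ℝ) * α) * (N : ℝ) ^ ((1 : ℝ) - (N : ℝ))) := by
  intro x hx
  have hn : (0 : ℝ) < N := by exact_mod_cast (by omega : 0 < N)
  have hux : ContDiffAt ℝ 2 u x := hu.contDiffAt (hΩopen.mem_nhds hx)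
  have hexp : ∀ t : ℝ, HasDerivAt (fun s => Real.exp (-s / N)) (-(Real.exp (-t / N) / N)) t :=
    fun t => by
      convert ((hasDerivAt_neg t).div_const (N : ℝ)).exp using 1
      ring
  have hgradv : ∀ y ∈ Ω, gradient (fun w => Real.exp (-(u w) / N)) y
      = -(Real.exp (-(u y) / N) / N) • gradient u y := fun y hy =>
    (hexp _).gradient_comp ((hu.contDiffAt (hΩopen.mem_nhds hy)).differentiableAt two_ne_zero)
  set ψ : ℝ → ℝ := fun t => -(Real.exp (-t / N) / N) ^ ((N : ℝ) - 1)
  have hflux : (fun y => ‖gradient (fun w => Real.exp (-(u w) / N)) y‖ ^ ((N : ℝ) - 2) •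
      gradient (fun w => Real.exp (-(u w) / N)) y) =ᶠ[𝓝 x]
      fun y => ψ (u y) • (‖gradient u y‖ ^ ((N : ℝ) - 2) • gradient u y) := by
    filter_upwards [hΩopen.mem_nhds hx] with y hy
    have ha : 0 < Real.exp (-(u y) / N) / N := by positivity
    rw [hgradv y hy, norm_smul_rpow_smul, abs_neg, abs_of_pos ha, mul_neg,
      ← Real.rpow_add_one ha.ne', show (N : ℝ) - 2 + 1 = N - 1 by ring]
  have hψ : HasDerivAt ψ (-(-(Real.exp (-(u x) / N) / N) / N * ((N : ℝ) - 1) *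
      (Real.exp (-(u x) / N) / N) ^ ((N : ℝ) - 1 - 1))) (u x) :=
    ((hexp (u x)).div_const (N : ℝ) |>.rpow_const (Or.inl (by positivity))).neg
  have hexpu : Real.exp (u x) = Real.exp (-(u x) / N) ^ (-(N : ℝ)) := by
    rw [← Real.exp_mul]
    field_simp
  rw [ediv_congr_of_eventuallyEq hflux, ediv_comp_smul_flux _ hux (hgrad x hx) hψ,
    neg_eq_iff_eq_neg.1 (hpde x hx), hgradv x hx, norm_smul, Real.norm_eq_abs, abs_neg,
    abs_of_pos (by positivity), hexpu]
  exact pLaplacian_exp_substitution_identity _ _ _ _ hn (Real.exp_pos _) (norm_nonneg _)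

/-- If `u` is a pointwise solution of `-Δ_N u = |x|^{Nα} e^u` on an open set
`Ω ⊆ ℝ^N \ {0}` with nonvanishing gradient, then `v := e^{-u/N}` satisfies
`Δ_N v = (1/v)((N-1)|∇v|^N + |x|^{Nα} N^{1-N})` on `Ω`. -/
theorem statement9 (N : ℕ) (hN : 2 ≤ N) (α : ℝ)
    (Ω : Set (EuclideanSpace ℝ (Fin N))) (hΩopen : IsOpen Ω)
    (hΩ : Ω ⊆ {(0 : EuclideanSpace ℝ (Fin N))}ᶜ)
    (u : EuclideanSpace ℝ (Fin N) → ℝ) (hu : ContDiffOn ℝ 2 u Ω)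
    (hgrad : ∀ x ∈ Ω, gradient u x ≠ 0)
    (hpde : ∀ x ∈ Ω,
      -ediv (fun y => ‖gradient u y‖ ^ ((N : ℝ) - 2) • gradient u y) x
        = ‖x‖ ^ ((N : ℝ) * α) * Real.exp (u x)) :
    ∀ x ∈ Ω,
      ediv (fun y => ‖gradient (fun w => Real.exp (-(u w) / N)) y‖ ^ ((N : ℝ) - 2) •
          gradient (fun w => Real.exp (-(u w) / N)) y) x
        = (1 / Real.exp (-(u x) / N)) *
            (((N : ℝ) - 1) * ‖gradient (fun w => Real.exp (-(u w) / N)) x‖ ^ (N : ℝ)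
              + ‖x‖ ^ ((N : ℝ) * α) * (N : ℝ) ^ ((1 : ℝ) - (N : ℝ))) :=
  statement9_general N hN α Ω hΩopen u hu hgrad hpde
end
end

section
/- Let α > −1 and let u be smooth on ℝ² \ {0} and satisfy −Δu(x) = |x|^{2α} e^{u(x)} pointwise for x ≠ 0. Set v := e^{−u/2}, P(x) := (1/v(x)) · ( |x|^{−2α} |∇v(x)|² + 1/2 ), and H_{ij}(x) := ∂_i∂_j v(x) + α |x|^{−2} ⟨x, ∇v(x)⟩ δ_{ij} − α |x|^{−2} ( x_i ∂_j v(x) + x_j ∂_i v(x) ) for i, j ∈ {1,2}. Then for every x ∈ ℝ² \ {0}, ΔP(x) = 2 v(x)^{−1} |x|^{−2α} Σ_{i,j=1}^{2} ( H_{ij}(x) − (P(x)/2) |x|^{2α} δ_{ij} )²; in particular ΔP ≥ 0 on ℝ² \ {0}. -/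
open MeasureTheory Filter
open scoped RealInnerProductSpace Topology

noncomputable section

/-- Partial derivative of `f` in the `i`-th coordinate direction. -/
def pd {N : ℕ} (i : Fin N) (f : EuclideanSpace ℝ (Fin N) → ℝ)
    (x : EuclideanSpace ℝ (Fin N)) : ℝ :=
  fderiv ℝ f x (EuclideanSpace.single i 1)

/-- The function `v = e^{-u/2}`. -/
def vfun (u : EuclideanSpace ℝ (Fin 2) → ℝ) (x : EuclideanSpace ℝ (Fin 2)) : ℝ :=
  Real.exp (-(u x) / 2)

/-- The `P`-function `P = (1/v)(|x|^{-2α}|∇v|² + 1/2)`. -/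
def Pfun (α : ℝ) (u : EuclideanSpace ℝ (Fin 2) → ℝ) (x : EuclideanSpace ℝ (Fin 2)) : ℝ :=
  (1 / vfun u x) * (‖x‖ ^ (-(2 * α)) * ‖gradient (vfun u) x‖ ^ 2 + 1 / 2)

/-- The components of the conformal Hessian
`H_{ij} = ∂_i∂_j v + α|x|^{-2}⟨x,∇v⟩δ_{ij} - α|x|^{-2}(x_i ∂_j v + x_j ∂_i v)`. -/
def Hfun (α : ℝ) (u : EuclideanSpace ℝ (Fin 2) → ℝ) (i j : Fin 2)
    (x : EuclideanSpace ℝ (Fin 2)) : ℝ :=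
  pd i (pd j (vfun u)) x
    + α / ‖x‖ ^ 2 * ⟪x, gradient (vfun u) x⟫ * (if i = j then 1 else 0)
    - α / ‖x‖ ^ 2 * (x i * pd j (vfun u) x + x j * pd i (vfun u) x)

namespace S10

abbrev E2 := EuclideanSpace ℝ (Fin 2)
def S : Set E2 := {0}ᶜ
lemma hS : IsOpen S := isOpen_compl_singleton

lemma pd_congr {f g : E2 → ℝ} {x : E2} (h : f =ᶠ[𝓝 x] g) (i : Fin 2) : pd i f x = pd i g x := by
  unfold pd; rw [h.fderiv_eq]

lemma pd_congr_on {f g : E2 → ℝ} {x : E2} (hx : x ∈ S) (h : ∀ y ∈ S, f y = g y) (i : Fin 2) :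
    pd i f x = pd i g x :=
  pd_congr (eventually_of_mem (hS.mem_nhds hx) h) i

lemma cd_diffAt {f : E2 → ℝ} (hf : ContDiffOn ℝ (⊤ : ℕ∞) f S) {x} (hx : x ∈ S) :
    DifferentiableAt ℝ f x :=
  (hf.contDiffAt (hS.mem_nhds hx)).differentiableAt (by simp)

lemma cd_pd {f : E2 → ℝ} (hf : ContDiffOn ℝ (⊤ : ℕ∞) f S) (i : Fin 2) :
    ContDiffOn ℝ (⊤ : ℕ∞) (pd i f) S :=
  (hf.fderiv_of_isOpen hS (by simp)).clm_apply contDiffOn_const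

lemma pd_add {f g : E2 → ℝ} {x : E2} (hf : DifferentiableAt ℝ f x)
    (hg : DifferentiableAt ℝ g x) (i : Fin 2) :
    pd i (fun y => f y + g y) x = pd i f x + pd i g x := by
  unfold pd; rw [fderiv_fun_add hf hg]; rfl

lemma pd_sub {f g : E2 → ℝ} {x : E2} (hf : DifferentiableAt ℝ f x)
    (hg : DifferentiableAt ℝ g x) (i : Fin 2) :
    pd i (fun y => f y - g y) x = pd i f x - pd i g x := by
  unfold pd; rw [fderiv_fun_sub hf hg]; rfl

lemma pd_mul {f g : E2 → ℝ} {x : E2} (hf : DifferentiableAt ℝ f x)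
    (hg : DifferentiableAt ℝ g x) (i : Fin 2) :
    pd i (fun y => f y * g y) x = pd i f x * g x + f x * pd i g x := by
  unfold pd; rw [fderiv_fun_mul hf hg]; simp; ring

lemma pd_const_mul {f : E2 → ℝ} {x : E2} (hf : DifferentiableAt ℝ f x) (c : ℝ) (i : Fin 2) :
    pd i (fun y => c * f y) x = c * pd i f x := by
  unfold pd; rw [fderiv_const_mul hf]; rfl

lemma pd_const (c : ℝ) (x : E2) (i : Fin 2) : pd i (fun _ => c) x = 0 := by
  simp [pd]

lemma pd_comm {f : E2 → ℝ} {x : E2} (hf : ContDiffAt ℝ (⊤ : ℕ∞) f x) (i j : Fin 2) :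
    pd i (pd j f) x = pd j (pd i f) x := by
  have hsym := hf.isSymmSndFDerivAt (by rw [minSmoothness_of_isRCLikeNormedField]; show ((2:ℕ∞) : WithTop ℕ∞) ≤ ((⊤:ℕ∞) : WithTop ℕ∞); exact WithTop.coe_le_coe.mpr le_top)
  have hd : DifferentiableAt ℝ (fderiv ℝ f) x :=
    (hf.fderiv_right (m := 1) (WithTop.coe_le_coe.mpr le_top)).differentiableAt one_ne_zero
  have key : ∀ a b : Fin 2, pd a (pd b f) x
      = fderiv ℝ (fderiv ℝ f) x (EuclideanSpace.single a 1) (EuclideanSpace.single b 1) := by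
    intro a b
    have h2 := ((ContinuousLinearMap.apply ℝ ℝ
        (EuclideanSpace.single b (1:ℝ))).hasFDerivAt.comp x hd.hasFDerivAt).fderiv
    show fderiv ℝ (pd b f) x (EuclideanSpace.single a 1) = _
    rw [show pd b f = ⇑(ContinuousLinearMap.apply ℝ ℝ (EuclideanSpace.single b (1:ℝ)))
        ∘ (fderiv ℝ f) from rfl, h2]
    rfl
  rw [key, key, hsym]

lemma diffAt_coord (k : Fin 2) (x : E2) : DifferentiableAt ℝ (fun y : E2 => y k) x :=
  (EuclideanSpace.proj (𝕜 := ℝ) k).differentiableAt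

lemma pd_coord (k i : Fin 2) (x : E2) :
    pd i (fun y : E2 => y k) x = if i = k then 1 else 0 := by
  have h : (fun y : E2 => y k) = fun y => EuclideanSpace.proj (𝕜 := ℝ) k y := rfl
  unfold pd
  rw [h, (EuclideanSpace.proj (𝕜 := ℝ) k).fderiv]
  simp [EuclideanSpace.single_apply, eq_comm]

lemma hasFDerivAt_norm_rpow (c : ℝ) {x : E2} (hx : x ≠ 0) :
    HasFDerivAt (fun y : E2 => ‖y‖ ^ c)
      ((c * ‖x‖ ^ (c - 2)) • (innerSL ℝ x : E2 →L[ℝ] ℝ)) x := by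
  have hn : (0:ℝ) < ‖x‖ := norm_pos_iff.mpr hx
  have h1 : HasFDerivAt (fun y : E2 => ‖y‖ ^ 2)
      ((2:ℝ) • (innerSL ℝ x : E2 →L[ℝ] ℝ)) x := by
    have := (hasFDerivAt_id x).norm_sq
    simp only [ContinuousLinearMap.comp_id, id_eq] at this
    convert this using 1
    ext y
    simp
    ring
    ext y; simp
  have h2 : HasDerivAt (fun t : ℝ => t ^ (c/2)) ((c/2) * (‖x‖^2) ^ (c/2 - 1)) (‖x‖^2) :=
    Real.hasDerivAt_rpow_const (Or.inl (by positivity))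
  have h3 := h2.comp_hasFDerivAt x h1
  have hfe : (fun t : ℝ => t ^ (c/2)) ∘ (fun y : E2 => ‖y‖ ^ 2) = fun y : E2 => ‖y‖ ^ c := by
    funext y
    simp only [Function.comp]
    rw [← Real.rpow_natCast ‖y‖ 2, ← Real.rpow_mul (norm_nonneg y)]
    norm_num
    congr 1
    ring
  have hde : ((c/2) * (‖x‖^2) ^ (c/2 - 1)) • ((2:ℝ) • (innerSL ℝ x : E2 →L[ℝ] ℝ))
      = (c * ‖x‖ ^ (c - 2)) • (innerSL ℝ x : E2 →L[ℝ] ℝ) := by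
    rw [smul_smul]
    congr 1
    rw [← Real.rpow_natCast ‖x‖ 2, ← Real.rpow_mul (norm_nonneg x)]
    push_cast
    rw [show (2:ℝ) * (c/2 - 1) = c - 2 by ring]
    ring
  rw [hfe, hde] at h3
  exact h3

lemma inner_single_right (g : E2) (i : Fin 2) : ⟪g, EuclideanSpace.single i (1:ℝ)⟫ = g i := by
  simp [PiLp.inner_apply, EuclideanSpace.single_apply, Fin.sum_univ_two]

lemma pd_norm_rpow (c : ℝ) {x : E2} (hx : x ≠ 0) (i : Fin 2) :
    pd i (fun y : E2 => ‖y‖ ^ c) x = c * ‖x‖ ^ (c - 2) * x i := by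
  unfold pd
  rw [(hasFDerivAt_norm_rpow c hx).fderiv]
  rw [ContinuousLinearMap.smul_apply, smul_eq_mul]
  have h2 : (innerSL ℝ x : E2 →L[ℝ] ℝ) (EuclideanSpace.single i 1) = x i :=
    inner_single_right x i
  rw [h2]

lemma gradient_apply (f : E2 → ℝ) (x : E2) (i : Fin 2) : gradient f x i = pd i f x := by
  have h : ⟪gradient f x, EuclideanSpace.single i (1:ℝ)⟫
      = fderiv ℝ f x (EuclideanSpace.single i 1) := by
    rw [gradient, InnerProductSpace.toDual_symm_apply]
  rw [pd, ← h, EuclideanSpace.inner_single_right]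
  simp

lemma gradient_norm_sq (f : E2 → ℝ) (x : E2) :
    ‖gradient f x‖ ^ 2 = pd 0 f x ^ 2 + pd 1 f x ^ 2 := by
  rw [EuclideanSpace.norm_sq_eq, Fin.sum_univ_two, gradient_apply, gradient_apply, Real.norm_eq_abs, Real.norm_eq_abs, sq_abs, sq_abs]
  skip
  skip

lemma inner_gradient (f : E2 → ℝ) (x : E2) :
    ⟪x, gradient f x⟫ = x 0 * pd 0 f x + x 1 * pd 1 f x := by
  rw [PiLp.inner_apply, Fin.sum_univ_two, gradient_apply, gradient_apply]; simp; ring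

end S10

set_option maxHeartbeats 2000000 in
/-- The differential identity satisfied by the `P`-function in dimension 2:
`ΔP = 2 v^{-1} |x|^{-2α} Σ_{ij} (H_{ij} - (P/2)|x|^{2α} δ_{ij})²`; in particular
`P` is subharmonic away from the origin. -/
theorem statement10 (α : ℝ) (hα : -1 < α) (u : EuclideanSpace ℝ (Fin 2) → ℝ)
    (hsm : ContDiffOn ℝ (⊤ : ℕ∞) u {(0 : EuclideanSpace ℝ (Fin 2))}ᶜ)
    (hpde : ∀ x : EuclideanSpace ℝ (Fin 2), x ≠ 0 →
      -(pd 0 (pd 0 u) x + pd 1 (pd 1 u) x) = ‖x‖ ^ (2 * α) * Real.exp (u x)) :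
    ∀ x : EuclideanSpace ℝ (Fin 2), x ≠ 0 →
      (pd 0 (pd 0 (Pfun α u)) x + pd 1 (pd 1 (Pfun α u)) x
          = 2 * (vfun u x)⁻¹ * ‖x‖ ^ (-(2 * α)) *
            ∑ i : Fin 2, ∑ j : Fin 2,
              (Hfun α u i j x - Pfun α u x / 2 * ‖x‖ ^ (2 * α) * (if i = j then 1 else 0)) ^ 2)
        ∧ 0 ≤ pd 0 (pd 0 (Pfun α u)) x + pd 1 (pd 1 (Pfun α u)) x := by
  intro x hx
  have hxS : x ∈ S10.S := hx
  have hu : ContDiffOn ℝ (⊤ : ℕ∞) u S10.S := hsm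
  set v := vfun u with hv_def
  have hv : ContDiffOn ℝ (⊤ : ℕ∞) v S10.S := by
    have h2 : ContDiffOn ℝ (⊤ : ℕ∞) (fun y => -(u y)/2) S10.S := (hu.neg).div_const 2
    exact Real.contDiff_exp.comp_contDiffOn h2
  have hvpos : ∀ y : S10.E2, 0 < v y := fun y => Real.exp_pos _
  set L := (fun y : S10.E2 => pd 0 (pd 0 v) y + pd 1 (pd 1 v) y) with hLdef
  have hpdv : ∀ i : Fin 2, ContDiffOn ℝ (⊤ : ℕ∞) (pd i v) S10.S := fun i => S10.cd_pd hv i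
  have hpd2 : ∀ i j : Fin 2, ContDiffOn ℝ (⊤ : ℕ∞) (pd i (pd j v)) S10.S :=
    fun i j => S10.cd_pd (hpdv j) i
  have hLcd : ContDiffOn ℝ (⊤ : ℕ∞) L S10.S := (hpd2 0 0).add (hpd2 1 1)
  have hpdL : ∀ k : Fin 2, ContDiffOn ℝ (⊤ : ℕ∞) (pd k L) S10.S := fun k => S10.cd_pd hLcd k
  -- first derivatives of v in terms of u
  have hvu : ∀ (i : Fin 2), ∀ y ∈ S10.S, pd i v y = -(1/2) * (v y * pd i u y) := by
    intro i y hy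
    have hU : HasFDerivAt u (fderiv ℝ u y) y := (S10.cd_diffAt hu hy).hasFDerivAt
    have h2 : HasFDerivAt (fun z => -(u z)/2) ((-(1/2) : ℝ) • fderiv ℝ u y) y := by
      have hfun : (fun z : S10.E2 => -(u z)/2) = fun z => ((-(1/2) : ℝ)) • u z := by
        funext z
        simp
        ring
      rw [hfun]
      exact hU.const_smul ((-(1/2)) : ℝ)
    have h3 := (Real.hasDerivAt_exp (-(u y)/2)).comp_hasFDerivAt y h2
    have h3' : HasFDerivAt v (Real.exp (-(u y)/2) • ((-(1/2) : ℝ) • fderiv ℝ u y)) y := h3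
    show pd i v y = _
    unfold pd
    rw [h3'.fderiv]
    rw [show Real.exp (-(u y)/2) = v y from rfl]
    simp
    ring
  -- second derivatives of v in terms of u
  have hv2 : ∀ (i k : Fin 2), ∀ y ∈ S10.S,
      pd k (pd i v) y = -(1/2) * (pd k v y * pd i u y + v y * pd k (pd i u) y) := by
    intro i k y hy
    have h1 : pd k (pd i v) y = pd k (fun z => -(1/2) * (v z * pd i u z)) y :=
      S10.pd_congr_on hy (fun z hz => hvu i z hz) k
    rw [h1, S10.pd_const_mul ((S10.cd_diffAt hv hy).fun_mul (S10.cd_diffAt (S10.cd_pd hu i) hy)) _ k,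
      S10.pd_mul (S10.cd_diffAt hv hy) (S10.cd_diffAt (S10.cd_pd hu i) hy) k]
  -- the fundamental constraint from the PDE
  have hC : ∀ y ∈ S10.S, v y * L y - pd 0 v y * pd 0 v y - pd 1 v y * pd 1 v y
      = 2⁻¹ * ‖y‖ ^ (2*α) := by
    intro y hy
    have e0 := hvu 0 y hy
    have e1 := hvu 1 y hy
    have e00 := hv2 0 0 y hy
    have e11 := hv2 1 1 y hy
    have hpde' := hpde y hy
    have hVE : v y * v y * Real.exp (u y) = 1 := by
      rw [show v y = Real.exp (-(u y)/2) from rfl, ← Real.exp_add, ← Real.exp_add]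
      norm_num
    have hLy : L y = pd 0 (pd 0 v) y + pd 1 (pd 1 v) y := rfl
    rw [hLy, e00, e11, e0, e1]
    linear_combination (2⁻¹ * (v y)^2) * hpde' + (2⁻¹ * ‖y‖ ^ (2*α)) * hVE
  -- first derivative of the constraint
  have hG1 : ∀ (k : Fin 2), ∀ y ∈ S10.S,
      pd k v y * L y + v y * pd k L y - 2*(pd 0 v y * pd k (pd 0 v) y)
        - 2*(pd 1 v y * pd k (pd 1 v) y) - α * (y k * ‖y‖ ^ (2*α - 2)) = 0 := by
    intro k y hy
    have hy0 : y ≠ 0 := hy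
    have hDv := S10.cd_diffAt hv hy
    have hDL := S10.cd_diffAt hLcd hy
    have hD0 := S10.cd_diffAt (hpdv 0) hy
    have hD1 := S10.cd_diffAt (hpdv 1) hy
    have hrp : DifferentiableAt ℝ (fun z : S10.E2 => ‖z‖ ^ (2*α)) y :=
      (S10.hasFDerivAt_norm_rpow (2*α) hy0).differentiableAt
    have hzero : pd k (fun z => v z * L z - pd 0 v z * pd 0 v z - pd 1 v z * pd 1 v z
        - 2⁻¹ * ‖z‖ ^ (2*α)) y = 0 := by
      rw [S10.pd_congr_on hy (g := fun _ => (0:ℝ)) (fun z hz => by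
        have h := hC z hz; linarith) k, S10.pd_const]
    rw [S10.pd_sub (((hDv.fun_mul hDL).fun_sub (hD0.fun_mul hD0)).fun_sub (hD1.fun_mul hD1)) (hrp.const_mul 2⁻¹) k,
      S10.pd_sub ((hDv.fun_mul hDL).fun_sub (hD0.fun_mul hD0)) (hD1.fun_mul hD1) k,
      S10.pd_sub (hDv.fun_mul hDL) (hD0.fun_mul hD0) k,
      S10.pd_mul hDv hDL k, S10.pd_mul hD0 hD0 k, S10.pd_mul hD1 hD1 k,
      S10.pd_const_mul hrp 2⁻¹ k, S10.pd_norm_rpow (2*α) hy0 k] at hzero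
    linear_combination hzero
  -- symmetry of second derivatives
  have hcomm : ∀ (a b : Fin 2), ∀ y ∈ S10.S, pd a (pd b v) y = pd b (pd a v) y :=
    fun a b y hy => S10.pd_comm (hv.contDiffAt (S10.hS.mem_nhds hy)) a b
  have hP01 : pd 0 (pd 1 v) x = pd 1 (pd 0 v) x := hcomm 0 1 x hxS
  have hThird : ∀ i : Fin 2, pd 0 (pd 0 (pd i v)) x + pd 1 (pd 1 (pd i v)) x = pd i L x := by
    intro i
    have c0 : pd 0 (pd 0 (pd i v)) x = pd i (pd 0 (pd 0 v)) x := by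
      rw [S10.pd_congr_on hxS (fun z hz => hcomm 0 i z hz) 0]
      exact S10.pd_comm ((hpdv 0).contDiffAt (S10.hS.mem_nhds hxS)) 0 i
    have c1 : pd 1 (pd 1 (pd i v)) x = pd i (pd 1 (pd 1 v)) x := by
      rw [S10.pd_congr_on hxS (fun z hz => hcomm 1 i z hz) 1]
      exact S10.pd_comm ((hpdv 1).contDiffAt (S10.hS.mem_nhds hxS)) 1 i
    rw [c0, c1, hLdef]
    exact (S10.pd_add (S10.cd_diffAt (hpd2 0 0) hxS) (S10.cd_diffAt (hpd2 1 1) hxS) i).symm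
  -- second derivative of the constraint, at x
  have hx0 : x ≠ 0 := hx
  have hD2 : ∀ k : Fin 2,
      (pd k (pd k v) x * L x + pd k v x * pd k L x)
      + (pd k v x * pd k L x + v x * pd k (pd k L) x)
      - 2 * (pd k (pd 0 v) x * pd k (pd 0 v) x + pd 0 v x * pd k (pd k (pd 0 v)) x)
      - 2 * (pd k (pd 1 v) x * pd k (pd 1 v) x + pd 1 v x * pd k (pd k (pd 1 v)) x)
      - α * ((if k = k then (1:ℝ) else 0) * ‖x‖ ^ (2*α - 2)
          + x k * ((2*α - 2) * ‖x‖ ^ (2*α - 2 - 2) * x k)) = 0 := by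
    intro k
    have hDv := S10.cd_diffAt hv hxS
    have hDL := S10.cd_diffAt hLcd hxS
    have hDkv := S10.cd_diffAt (hpdv k) hxS
    have hDkL := S10.cd_diffAt (hpdL k) hxS
    have hD0 := S10.cd_diffAt (hpdv 0) hxS
    have hD1 := S10.cd_diffAt (hpdv 1) hxS
    have hDk0 := S10.cd_diffAt (hpd2 k 0) hxS
    have hDk1 := S10.cd_diffAt (hpd2 k 1) hxS
    have hcoord := S10.diffAt_coord k x
    have hrp : DifferentiableAt ℝ (fun z : S10.E2 => ‖z‖ ^ (2*α - 2)) x :=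
      (S10.hasFDerivAt_norm_rpow (2*α - 2) hx0).differentiableAt
    have hzero : pd k (fun z => pd k v z * L z + v z * pd k L z
        - 2*(pd 0 v z * pd k (pd 0 v) z) - 2*(pd 1 v z * pd k (pd 1 v) z)
        - α * (z k * ‖z‖ ^ (2*α - 2))) x = 0 := by
      rw [S10.pd_congr_on hxS (g := fun _ => (0:ℝ)) (fun z hz => hG1 k z hz) k, S10.pd_const]
    rw [S10.pd_sub ((((hDkv.fun_mul hDL).fun_add (hDv.fun_mul hDkL)).fun_sub
          ((hD0.fun_mul hDk0).const_mul 2)).fun_sub ((hD1.fun_mul hDk1).const_mul 2))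
        ((hcoord.fun_mul hrp).const_mul α) k,
      S10.pd_sub (((hDkv.fun_mul hDL).fun_add (hDv.fun_mul hDkL)).fun_sub ((hD0.fun_mul hDk0).const_mul 2))
        ((hD1.fun_mul hDk1).const_mul 2) k,
      S10.pd_sub ((hDkv.fun_mul hDL).fun_add (hDv.fun_mul hDkL)) ((hD0.fun_mul hDk0).const_mul 2) k,
      S10.pd_add (hDkv.fun_mul hDL) (hDv.fun_mul hDkL) k,
      S10.pd_mul hDkv hDL k, S10.pd_mul hDv hDkL k,
      S10.pd_const_mul (hD0.fun_mul hDk0) 2 k, S10.pd_mul hD0 hDk0 k,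
      S10.pd_const_mul (hD1.fun_mul hDk1) 2 k, S10.pd_mul hD1 hDk1 k,
      S10.pd_const_mul (hcoord.fun_mul hrp) α k, S10.pd_mul hcoord hrp k,
      S10.pd_coord k k x, S10.pd_norm_rpow (2*α - 2) hx0 k] at hzero
    linear_combination hzero
  -- P agrees with |x|^(-2α) Δv on S
  have hPQ : ∀ y ∈ S10.S, Pfun α u y = ‖y‖ ^ (-(2*α)) * L y := by
    intro y hy
    have hy0 : y ≠ 0 := hy
    have hry : (0:ℝ) < ‖y‖ := norm_pos_iff.mpr hy0
    have hsy : (0:ℝ) < ‖y‖ ^ (2*α) := Real.rpow_pos_of_pos hry _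
    have hgn : ‖gradient v y‖ ^ 2 = pd 0 v y ^ 2 + pd 1 v y ^ 2 := S10.gradient_norm_sq v y
    have hCy := hC y hy
    have hneg : ‖y‖ ^ (-(2*α)) = (‖y‖ ^ (2*α))⁻¹ := Real.rpow_neg (norm_nonneg y) _
    have hLy : L y = pd 0 (pd 0 v) y + pd 1 (pd 1 v) y := rfl
    show (1 / v y) * (‖y‖ ^ (-(2*α)) * ‖gradient v y‖ ^ 2 + 1/2) = ‖y‖ ^ (-(2*α)) * L y
    rw [hgn, hneg]
    rw [hLy]
    field_simp [ne_of_gt (hvpos y), ne_of_gt hsy]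
    linear_combination (-2) * hCy
  -- first derivatives of P
  have hQ1 : ∀ (k : Fin 2), ∀ y ∈ S10.S,
      pd k (Pfun α u) y = -(2*α) * ‖y‖ ^ (-(2*α) - 2) * y k * L y
        + ‖y‖ ^ (-(2*α)) * pd k L y := by
    intro k y hy
    have hy0 : y ≠ 0 := hy
    have hrq : DifferentiableAt ℝ (fun z : S10.E2 => ‖z‖ ^ (-(2*α))) y :=
      (S10.hasFDerivAt_norm_rpow (-(2*α)) hy0).differentiableAt
    have h1 : pd k (Pfun α u) y = pd k (fun z => ‖z‖ ^ (-(2*α)) * L z) y :=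
      S10.pd_congr_on hy (fun z hz => hPQ z hz) k
    rw [h1, S10.pd_mul hrq (S10.cd_diffAt hLcd hy) k, S10.pd_norm_rpow (-(2*α)) hy0 k]
  -- second derivatives of P at x
  have hQ2 : ∀ k : Fin 2, pd k (pd k (Pfun α u)) x
      = (-(2*α)) * (-(2*α) - 2) * ‖x‖ ^ (-(2*α) - 2 - 2) * x k * x k * L x
        + (-(2*α)) * ‖x‖ ^ (-(2*α) - 2) * (if k = k then (1:ℝ) else 0) * L x
        + 2 * ((-(2*α)) * ‖x‖ ^ (-(2*α) - 2) * x k) * pd k L x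
        + ‖x‖ ^ (-(2*α)) * pd k (pd k L) x := by
    intro k
    have hrc2 : DifferentiableAt ℝ (fun z : S10.E2 => ‖z‖ ^ (-(2*α) - 2)) x :=
      (S10.hasFDerivAt_norm_rpow (-(2*α) - 2) hx0).differentiableAt
    have hrq : DifferentiableAt ℝ (fun z : S10.E2 => ‖z‖ ^ (-(2*α))) x :=
      (S10.hasFDerivAt_norm_rpow (-(2*α)) hx0).differentiableAt
    have hc1 : DifferentiableAt ℝ (fun z : S10.E2 => -(2*α) * ‖z‖ ^ (-(2*α) - 2)) x :=
      hrc2.const_mul _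
    have hcoord := S10.diffAt_coord k x
    have hDL := S10.cd_diffAt hLcd hxS
    have hDkL := S10.cd_diffAt (hpdL k) hxS
    have e : pd k (pd k (Pfun α u)) x = pd k (fun z =>
        -(2*α) * ‖z‖ ^ (-(2*α) - 2) * z k * L z + ‖z‖ ^ (-(2*α)) * pd k L z) x :=
      S10.pd_congr_on hxS (fun z hz => hQ1 k z hz) k
    rw [S10.pd_add ((hc1.fun_mul hcoord).fun_mul hDL) (hrq.fun_mul hDkL) k,
      S10.pd_mul (hc1.fun_mul hcoord) hDL k,
      S10.pd_mul hc1 hcoord k,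
      S10.pd_const_mul hrc2 (-(2*α)) k,
      S10.pd_norm_rpow (-(2*α) - 2) hx0 k,
      S10.pd_coord k k x,
      S10.pd_mul hrq hDkL k,
      S10.pd_norm_rpow (-(2*α)) hx0 k] at e
    linear_combination e
  -- conversions for powers of ‖x‖
  have hr : (0:ℝ) < ‖x‖ := norm_pos_iff.mpr hx0
  have hs : (0:ℝ) < ‖x‖ ^ (2*α) := Real.rpow_pos_of_pos hr _
  have hr2 : ‖x‖ ^ 2 = x 0 * x 0 + x 1 * x 1 := by
    rw [EuclideanSpace.norm_sq_eq, Fin.sum_univ_two, Real.norm_eq_abs, Real.norm_eq_abs, sq_abs, sq_abs]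
    ring
  have cv2 : ‖x‖ ^ ((2:ℝ)) = ‖x‖ ^ (2:ℕ) := by
    rw [show ((2:ℝ)) = ((2:ℕ):ℝ) by norm_num, Real.rpow_natCast]
  have cvA : ‖x‖ ^ (-(2*α)) = (‖x‖ ^ (2*α))⁻¹ := Real.rpow_neg (norm_nonneg x) _
  have cvB : ‖x‖ ^ (-(2*α) - 2) = (‖x‖ ^ (2*α))⁻¹ / ‖x‖ ^ 2 := by
    rw [Real.rpow_sub hr, cvA, cv2]
  have cvC : ‖x‖ ^ (-(2*α) - 2 - 2) = (‖x‖ ^ (2*α))⁻¹ / ‖x‖ ^ 2 / ‖x‖ ^ 2 := by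
    rw [Real.rpow_sub hr, cvB, cv2]
  have cvD : ‖x‖ ^ (2*α - 2) = ‖x‖ ^ (2*α) / ‖x‖ ^ 2 := by
    rw [Real.rpow_sub hr, cv2]
  have cvE : ‖x‖ ^ (2*α - 2 - 2) = ‖x‖ ^ (2*α) / ‖x‖ ^ 2 / ‖x‖ ^ 2 := by
    rw [Real.rpow_sub hr, cvD, cv2]
  have hCx := hC x hxS
  have hG10 := hG1 0 x hxS
  have hG11 := hG1 1 x hxS
  have hD20 := hD2 0
  have hD21 := hD2 1
  have hTh0 := hThird 0
  have hTh1 := hThird 1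
  have hLX : L x = pd 0 (pd 0 v) x + pd 1 (pd 1 v) x := rfl
  simp only [reduceIte] at hD20 hD21
  rw [cvD] at hG10 hG11
  rw [cvD, cvE] at hD20 hD21
  have hPQx := hPQ x hxS
  have hVne : v x ≠ 0 := ne_of_gt (hvpos x)
  have hsne : ‖x‖ ^ (2*α) ≠ 0 := ne_of_gt hs
  have hrne : ‖x‖ ≠ 0 := ne_of_gt hr
  have hmain : pd 0 (pd 0 (Pfun α u)) x + pd 1 (pd 1 (Pfun α u)) x
      = 2 * (vfun u x)⁻¹ * ‖x‖ ^ (-(2 * α)) *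
        ∑ i : Fin 2, ∑ j : Fin 2,
          (Hfun α u i j x - Pfun α u x / 2 * ‖x‖ ^ (2 * α) * (if i = j then 1 else 0)) ^ 2 := by
    rw [hQ2 0, hQ2 1, hPQx]
    simp only [Hfun, Fin.sum_univ_two, S10.inner_gradient, reduceIte]
    rw [← hv_def]
    rw [cvA, cvB, cvC]
    rw [hr2] at hG10 hG11 hD20 hD21 ⊢
    rw [hLX] at hG10 hG11 hD20 hD21 hCx ⊢
    rw [← hP01] at hG11 hD21 ⊢
    have hqne : (x 0 * x 0 + x 1 * x 1) ≠ 0 := by rw [← hr2]; exact pow_ne_zero 2 hrne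
    simp only [Fin.reduceEq, reduceIte]
    linear_combination (norm := (field_simp [hVne, hsne, hqne, (show x 0 ^ 2 + x 1 ^ 2 ≠ 0 by rw [sq, sq]; exact hqne)]; ring))
      (v x * ‖x‖ ^ (2*α))⁻¹ * hD20 + (v x * ‖x‖ ^ (2*α))⁻¹ * hD21
      + (2 * pd 0 v x) * (v x * ‖x‖ ^ (2*α))⁻¹ * hTh0
      + (2 * pd 1 v x) * (v x * ‖x‖ ^ (2*α))⁻¹ * hTh1
      - (4*α*x 0) * (v x * ‖x‖ ^ (2*α) * (x 0 * x 0 + x 1 * x 1))⁻¹ * hG10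
      - (4*α*x 1) * (v x * ‖x‖ ^ (2*α) * (x 0 * x 0 + x 1 * x 1))⁻¹ * hG11
      + (4*α^2) * (v x * ‖x‖ ^ (2*α) * (x 0 * x 0 + x 1 * x 1))⁻¹ * hCx
  exact ⟨hmain, by
    rw [hmain]
    have h1 : (0:ℝ) ≤ 2 * (vfun u x)⁻¹ * ‖x‖ ^ (-(2 * α)) := by
      apply mul_nonneg
      apply mul_nonneg
      · norm_num
      · rw [← hv_def]
        exact inv_nonneg.mpr (le_of_lt (hvpos x))
      · exact Real.rpow_nonneg (norm_nonneg x) _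
    apply mul_nonneg h1
    apply Finset.sum_nonneg
    intro i _
    apply Finset.sum_nonneg
    intro j _
    exact sq_nonneg _⟩
end
end

section
/- Let N ≥ 2 be an integer, α > −1 and λ > 0 real numbers, and define U_{α,λ}(x) := log( c_N (α+1)^N λ^{N−1} / (1 + λ |x|^{N(α+1)/(N−1)})^N ) with c_N := N (N²/(N−1))^{N−1}. Then ∫_{ℝ^N} |x|^{Nα} e^{U_{α,λ}(x)} dx = c_N ω_N (α+1)^{N−1}, where ω_N denotes the Lebesgue volume of the unit ball in ℝ^N; in particular the total mass is independent of λ. -/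
open MeasureTheory Filter
open scoped RealInnerProductSpace Topology

noncomputable section

/-- The dimensional constant `c_N = N (N²/(N-1))^{N-1}`. -/
def cconst (N : ℕ) : ℝ := N * ((N : ℝ) ^ 2 / ((N : ℝ) - 1)) ^ (N - 1)

/-- The explicit radial family
`U_{α,λ}(x) = log( c_N (α+1)^N λ^{N-1} / (1 + λ|x|^{N(α+1)/(N-1)})^N )`. -/
def Ulam (N : ℕ) (α lam : ℝ) (x : EuclideanSpace ℝ (Fin N)) : ℝ :=
  Real.log (cconst N * (α + 1) ^ N * lam ^ (N - 1) /
    (1 + lam * ‖x‖ ^ ((N : ℝ) * (α + 1) / ((N : ℝ) - 1))) ^ N)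

/-!
The integrand is radial, so polar coordinates turn the integral into
`N ω_N ∫₀^∞ r^{N-1} r^{Nα} e^{U(r)} dr`. With `p = N(α+1)/(N-1)` the substitution `t = r^p`
reduces this to a multiple of `∫₀^∞ t^{N-2} / (1 + λt)^N dt`, which has the antiderivative
`(1 - (1 + λt)⁻¹)^{N-1} / ((N-1) λ^{N-1})`; the powers of `λ` cancel and
`c_N ω_N (α+1)^{N-1}` remains.
-/

open Set

theorem hasDerivAt_one_sub_inv_one_add_mul_pow (k : ℕ) {lam t : ℝ} (ht : 1 + lam * t ≠ 0) :
    HasDerivAt (fun t => (1 - (1 + lam * t)⁻¹) ^ (k + 1))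
      ((k + 1) * lam ^ (k + 1) * t ^ k / (1 + lam * t) ^ (k + 2)) t := by
  have hinv : HasDerivAt (fun t => (1 + lam * t)⁻¹) (-((1 + lam * t) ^ 2)⁻¹ * lam) t :=
    (hasDerivAt_inv ht).comp t (by simpa using ((hasDerivAt_id t).const_mul lam).const_add 1)
  refine ((hinv.const_sub 1).pow (k + 1)).congr_deriv ?_
  have hsub : 1 - (1 + lam * t)⁻¹ = lam * t / (1 + lam * t) := by field_simp; ring
  rw [hsub, div_pow]
  push_cast
  field_simp
  ring

theorem integral_Ioi_pow_div_one_add_mul_pow (k : ℕ) {lam : ℝ} (hlam : 0 < lam) :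
    ∫ t in Ioi (0 : ℝ), t ^ k / (1 + lam * t) ^ (k + 2) = 1 / ((k + 1) * lam ^ (k + 1)) := by
  have hpos : ∀ t : ℝ, 0 ≤ t → 0 < 1 + lam * t := fun t ht => by positivity
  set c : ℝ := (k + 1) * lam ^ (k + 1) with hc_def
  have hc : c ≠ 0 := by positivity
  set G : ℝ → ℝ := fun t => (1 - (1 + lam * t)⁻¹) ^ (k + 1) / c
  have hderiv : ∀ t ∈ Ioi (0 : ℝ), HasDerivAt G (t ^ k / (1 + lam * t) ^ (k + 2)) t := by
    intro t ht
    refine ((hasDerivAt_one_sub_inv_one_add_mul_pow k (hpos t (le_of_lt ht)).ne').div_const c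
      ).congr_deriv ?_
    rw [hc_def]
    field_simp
  have hcont : ContinuousWithinAt G (Ici 0) 0 := by
    have : ContinuousAt G 0 := by
      have h0 : (1 + lam * 0 : ℝ) ≠ 0 := by norm_num
      fun_prop (disch := exact h0)
    exact this.continuousWithinAt
  have hlim : Tendsto G atTop (𝓝 (1 / c)) := by
    have h : Tendsto (fun t : ℝ => (1 + lam * t)⁻¹) atTop (𝓝 0) :=
      (tendsto_atTop_add_const_left _ 1 (tendsto_id.const_mul_atTop hlam)).inv_tendsto_atTop
    simpa using ((tendsto_const_nhds (x := (1 : ℝ)).sub h).pow (k + 1)).div_const c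
  have hnonneg : ∀ t ∈ Ioi (0 : ℝ), 0 ≤ t ^ k / (1 + lam * t) ^ (k + 2) :=
    fun t ht => div_nonneg (pow_nonneg (le_of_lt ht) k) (pow_nonneg (hpos t (le_of_lt ht)).le _)
  rw [integral_Ioi_of_hasDerivAt_of_nonneg hcont hderiv hnonneg hlim]
  simp [G]

theorem integral_Ioi_rpow_div_one_add_mul_rpow_pow (k : ℕ) {p lam : ℝ} (hp : 0 < p)
    (hlam : 0 < lam) :
    ∫ y in Ioi (0 : ℝ), y ^ (p * (k + 1) - 1) / (1 + lam * y ^ p) ^ (k + 2)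
      = 1 / ((k + 1) * p * lam ^ (k + 1)) := by
  have hsubst := integral_comp_rpow_Ioi_of_pos hp
    (g := fun t : ℝ => t ^ k / (1 + lam * t) ^ (k + 2))
  rw [integral_Ioi_pow_div_one_add_mul_pow k hlam] at hsubst
  calc ∫ y in Ioi (0 : ℝ), y ^ (p * (k + 1) - 1) / (1 + lam * y ^ p) ^ (k + 2)
      = ∫ y in Ioi (0 : ℝ),
          p⁻¹ * ((p * y ^ (p - 1)) • ((y ^ p) ^ k / (1 + lam * y ^ p) ^ (k + 2))) := by
        refine setIntegral_congr_fun measurableSet_Ioi fun y (hy : 0 < y) => ?_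
        have hpow : y ^ (p * (k + 1) - 1) = y ^ (p - 1) * (y ^ p) ^ k := by
          rw [← Real.rpow_mul_natCast hy.le, ← Real.rpow_add hy]
          ring_nf
        rw [smul_eq_mul, hpow]
        field_simp
    _ = 1 / ((k + 1) * p * lam ^ (k + 1)) := by
        rw [integral_const_mul, hsubst]
        field_simp

theorem cconst_pos {N : ℕ} (hN : 2 ≤ N) : 0 < cconst N := by
  have : (1 : ℝ) < N := by exact_mod_cast hN
  unfold cconst
  have : (0 : ℝ) < N - 1 := by linarith
  positivity

theorem exp_Ulam {N : ℕ} (hN : 2 ≤ N) {α lam : ℝ} (hα : -1 < α) (hlam : 0 < lam)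
    (x : EuclideanSpace ℝ (Fin N)) :
    Real.exp (Ulam N α lam x) = cconst N * (α + 1) ^ N * lam ^ (N - 1) /
      (1 + lam * ‖x‖ ^ ((N : ℝ) * (α + 1) / ((N : ℝ) - 1))) ^ N := by
  have := cconst_pos hN
  have : 0 < α + 1 := by linarith
  exact Real.exp_log (by positivity)

/-- Quantization of the total mass on the explicit radial family:
`∫_{ℝ^N} |x|^{Nα} e^{U_{α,λ}} dx = c_N ω_N (α+1)^{N-1}`, independently of `λ`. -/
theorem statement19 (N : ℕ) (hN : 2 ≤ N) (α lam : ℝ) (hα : -1 < α) (hlam : 0 < lam) :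
    ∫ x : EuclideanSpace ℝ (Fin N), ‖x‖ ^ ((N : ℝ) * α) * Real.exp (Ulam N α lam x)
      = cconst N * (volume (Metric.ball (0 : EuclideanSpace ℝ (Fin N)) 1)).toReal *
          (α + 1) ^ (N - 1) := by
  simp_rw [exp_Ulam hN hα hlam]
  obtain ⟨k, rfl⟩ : ∃ k, N = k + 2 := ⟨N - 2, by omega⟩
  set p : ℝ := ((k + 2 : ℕ) : ℝ) * (α + 1) / (((k + 2 : ℕ) : ℝ) - 1) with hp_def
  have hα1 : 0 < α + 1 := by linarith
  have hp_eq : p = (k + 2) * (α + 1) / (k + 1) := by rw [hp_def]; push_cast; ring_nf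
  have hp : 0 < p := by rw [hp_eq]; positivity
  set C := cconst (k + 2) * (α + 1) ^ (k + 2) * lam ^ (k + 2 - 1)
  rw [integral_fun_norm_addHaar volume
    (fun r : ℝ => r ^ (((k + 2 : ℕ) : ℝ) * α) * (C / (1 + lam * r ^ p) ^ (k + 2))),
    finrank_euclideanSpace_fin]
  have hradial : ∀ y ∈ Ioi (0 : ℝ),
      y ^ (k + 2 - 1) • (y ^ (((k + 2 : ℕ) : ℝ) * α) * (C / (1 + lam * y ^ p) ^ (k + 2)))
        = C * (y ^ (p * (k + 1) - 1) / (1 + lam * y ^ p) ^ (k + 2)) := by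
    intro y (hy : 0 < y)
    have hpow : y ^ (k + 2 - 1) * y ^ (((k + 2 : ℕ) : ℝ) * α) = y ^ (p * (k + 1) - 1) := by
      rw [← Real.rpow_natCast, ← Real.rpow_add hy, hp_eq]
      congr 1
      push_cast
      field_simp
      ring
    rw [smul_eq_mul, ← hpow]
    ring
  rw [setIntegral_congr_fun measurableSet_Ioi hradial, integral_const_mul,
    integral_Ioi_rpow_div_one_add_mul_rpow_pow k hp hlam, nsmul_eq_mul, smul_eq_mul, hp_eq]
  simp only [C, Measure.real]
  push_cast
  field_simp
  ring
end
end
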